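/- arXiv:2304.06758 — 2 statements merged into one kernel-verified Lean document; each statement's English description precedes it below -/
import Mathlib

section
/- Let m ≥ 1, let M, N ⊆ [m] with M ≠ ∅ and N ⊊ [m], and let D = aΔ_M + cΔ_N^c ⊆ E^m. Then the binary Gray image Φ(C^L_D) is an F₂-linear code of length 2^{|M|+1}(2^m−2^{|N|}), with 2^{2|M|} codewords (F₂-dimension 2|M|), and minimum nonzero Hamming weight 2^{|M|−1}(2^m−2^{|N|}). Moreover, if |M|+|N| ≥ 3, then Φ(C^L_D) is self-orthogonal. -/
open Finset

/-- The simplicial complex `Δ_M ⊆ 𝔽₂^m` generated by `M ⊆ [m]`: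
all vectors whose support is contained in `M`. -/
def deltaC {m : ℕ} (M : Finset (Fin m)) : Finset (Fin m → ZMod 2) :=
  Finset.univ.filter (fun w => ∀ i, w i ≠ 0 → i ∈ M)

/-- Dot product over `𝔽₂`. -/
def dotp {m : ℕ} (x y : Fin m → ZMod 2) : ZMod 2 := ∑ i, x i * y i

/-- The Gray map on a single element `a·s + c·t ↔ (s, t)` of `E = 𝔽₂ × 𝔽₂`:
`Φ(as + ct) = (t, s + t)`. -/
def grayPair (e : ZMod 2 × ZMod 2) : Fin 2 → ZMod 2 := ![e.2, e.1 + e.2]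

/-- The left codeword `c^L_D(v)` for `v = aα + cβ ↔ (α, β)`:
its coordinate at `d = (t₁, t₂) ∈ D` is `a(α·t₁) + c(β·t₁) ↔ (α·t₁, β·t₁)`. -/
def cwL {m : ℕ} (Ds : Finset ((Fin m → ZMod 2) × (Fin m → ZMod 2)))
    (v : (Fin m → ZMod 2) × (Fin m → ZMod 2)) :
    {d // d ∈ Ds} → ZMod 2 × ZMod 2 :=
  fun d => (dotp v.1 d.1.1, dotp v.2 d.1.1)

/-- The Gray image `Φ(c^L_D(v)) ∈ 𝔽₂^{2|D|}` of the left codeword `c^L_D(v)`;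
its Hamming weight (`hammingNorm`) is the Lee weight of `c^L_D(v)`. -/
def gcwL {m : ℕ} (Ds : Finset ((Fin m → ZMod 2) × (Fin m → ZMod 2)))
    (v : (Fin m → ZMod 2) × (Fin m → ZMod 2)) :
    {d // d ∈ Ds} × Fin 2 → ZMod 2 :=
  fun x => grayPair (cwL Ds v x.1) x.2

/-- The right codeword `c^R_D(v)` for `v = aα + cβ ↔ (α, β)`:
its coordinate at `d = (t₁, t₂) ∈ D` is `a(t₁·α) + c(t₂·α) ↔ (t₁·α, t₂·α)`. -/
def cwR {m : ℕ} (Ds : Finset ((Fin m → ZMod 2) × (Fin m → ZMod 2)))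
    (v : (Fin m → ZMod 2) × (Fin m → ZMod 2)) :
    {d // d ∈ Ds} → ZMod 2 × ZMod 2 :=
  fun d => (dotp d.1.1 v.1, dotp d.1.2 v.1)

/-- The Gray image `Φ(c^R_D(v)) ∈ 𝔽₂^{2|D|}` of the right codeword `c^R_D(v)`;
its Hamming weight (`hammingNorm`) is the Lee weight of `c^R_D(v)`. -/
def gcwR {m : ℕ} (Ds : Finset ((Fin m → ZMod 2) × (Fin m → ZMod 2)))
    (v : (Fin m → ZMod 2) × (Fin m → ZMod 2)) :
    {d // d ∈ Ds} × Fin 2 → ZMod 2 :=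
  fun x => grayPair (cwR Ds v x.1) x.2

/-!
Since the Gray map is `𝔽₂`-linear, the Gray image of `c^L_D(aα + cβ)` at `(t₁, t₂)` is
`(β·t₁, (α + β)·t₁)`: it does not depend on `t₂`, so weights and inner products are
`|Δ_N^c| = 2^m - 2^|N|` times a sum over `t₁ ∈ Δ_M ≅ 𝔽₂^M`. A linear functional that is nonzero
on `Δ_M` is nonzero on exactly half of it, which gives the weights, and a codeword determines
`α` and `β` on `M`, which gives the size. For self-orthogonality, either `2^m - 2^|N|` is even,
or `N = ∅` and `|M| ≥ 3`; then `∑_{t ∈ Δ_M} t_i t_j = 0`, since the sum factorises over the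
coordinates and a coordinate of `M` other than `i, j` contributes `|𝔽₂| = 0`.
-/

lemma dotp_eq_dotProduct {m : ℕ} (x y : Fin m → ZMod 2) : dotp x y = x ⬝ᵥ y := rfl

section Delta

variable {m : ℕ} {M : Finset (Fin m)}

lemma mem_deltaC {w : Fin m → ZMod 2} : w ∈ deltaC M ↔ ∀ i ∉ M, w i = 0 := by
  simp only [deltaC, mem_filter, mem_univ, true_and]
  exact forall_congr' fun i => not_imp_comm

lemma deltaC_eq_piFinset (M : Finset (Fin m)) :
    deltaC M = Fintype.piFinset fun i => if i ∈ M then univ else {0} := by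
  ext w
  simp only [mem_deltaC, Fintype.mem_piFinset]
  refine forall_congr' fun i => ?_
  by_cases hi : i ∈ M <;> simp [hi]

lemma card_deltaC (M : Finset (Fin m)) : #(deltaC M) = 2 ^ #M := by
  simp [deltaC_eq_piFinset, Fintype.card_piFinset, apply_ite card, prod_ite_mem]

lemma card_compl_deltaC (M : Finset (Fin m)) : #(deltaC M)ᶜ = 2 ^ m - 2 ^ #M := by
  simp [card_compl, card_deltaC]

lemma add_mem_deltaC {t s : Fin m → ZMod 2} (ht : t ∈ deltaC M) (hs : s ∈ deltaC M) :
    t + s ∈ deltaC M :=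
  mem_deltaC.2 fun i hi => by simp [mem_deltaC.1 ht i hi, mem_deltaC.1 hs i hi]

lemma single_mem_deltaC {i : Fin m} (hi : i ∈ M) (x : ZMod 2) : Pi.single i x ∈ deltaC M :=
  mem_deltaC.2 fun _ hj => by simp [(ne_of_mem_of_not_mem hi hj).symm]

lemma dotp_eq_zero_of_mem_deltaC {γ t : Fin m → ZMod 2} (ht : t ∈ deltaC M)
    (hγ : ∀ i ∈ M, γ i = 0) : dotp γ t = 0 := by
  refine sum_eq_zero fun i _ => ?_
  by_cases hi : i ∈ M
  · simp [hγ i hi]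
  · simp [mem_deltaC.1 ht i hi]

lemma dotp_piecewise_of_mem_deltaC (x : Fin m → ZMod 2) {t : Fin m → ZMod 2}
    (ht : t ∈ deltaC M) : dotp (M.piecewise x 0) t = dotp x t := by
  refine sum_congr rfl fun i _ => ?_
  by_cases hi : i ∈ M
  · simp [hi]
  · simp [hi, mem_deltaC.1 ht i hi]

lemma eq_of_mem_deltaC {t s : Fin m → ZMod 2} (ht : t ∈ deltaC M) (hs : s ∈ deltaC M)
    (h : ∀ i ∈ M, t i = s i) : t = s := by
  funext i
  by_cases hi : i ∈ M
  · exact h i hi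
  · rw [mem_deltaC.1 ht i hi, mem_deltaC.1 hs i hi]

lemma piecewise_mem_deltaC (x : Fin m → ZMod 2) : M.piecewise x 0 ∈ deltaC M :=
  mem_deltaC.2 fun _ hi => piecewise_eq_of_notMem _ _ _ hi

-- Translation by `e_i` swaps the two fibres of `t ↦ γ·t` inside `Δ_M`.
lemma card_filter_dotp_ne_zero {γ : Fin m → ZMod 2} {i : Fin m} (hi : i ∈ M) (hγ : γ i ≠ 0) :
    #{t ∈ deltaC M | dotp γ t ≠ 0} = 2 ^ (#M - 1) := by
  set e : Fin m → ZMod 2 := Pi.single i 1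
  have hflip : ∀ t, dotp γ (t + e) ≠ 0 ↔ dotp γ t = 0 := fun t => by
    have hZMod2 : ∀ x y : ZMod 2, y ≠ 0 → (x + y ≠ 0 ↔ x = 0) := by decide
    rw [dotp_eq_dotProduct, dotProduct_add, dotProduct_single_one, ← dotp_eq_dotProduct]
    exact hZMod2 _ _ hγ
  have hinv : ∀ t, t + e + e = t := fun t => by rw [add_assoc, ZModModule.add_self, add_zero]
  have hswap : #{t ∈ deltaC M | dotp γ t ≠ 0} = #{t ∈ deltaC M | ¬ dotp γ t ≠ 0} := by
    have he : e ∈ deltaC M := single_mem_deltaC hi 1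
    refine card_nbij' (· + e) (· + e) ?_ ?_ (fun t _ => hinv t) (fun t _ => hinv t)
    · intro t ht
      simp only [coe_filter, Set.mem_ofPred_eq, not_not] at ht ⊢
      exact ⟨add_mem_deltaC ht.1 he, (hflip (t + e)).mp (by rw [hinv]; exact ht.2)⟩
    · intro t ht
      simp only [coe_filter, Set.mem_ofPred_eq, not_not] at ht ⊢
      exact ⟨add_mem_deltaC ht.1 he, (hflip t).mpr ht.2⟩
  have htotal := card_filter_add_card_filter_not (s := deltaC M) (fun t => dotp γ t ≠ 0)
  have hpow : 2 ^ #M = 2 ^ (#M - 1) * 2 := by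
    rw [← pow_succ, Nat.sub_add_cancel (card_pos.2 ⟨i, hi⟩)]
  rw [card_deltaC, ← hswap, hpow] at htotal
  omega

-- `t i * t j` is a product of one-variable factors, so its sum over the box `Δ_M` factorises,
-- and a coordinate `k ∈ M \ {i, j}` contributes the factor `∑ x : ZMod 2, 1 = 0`.
lemma sum_apply_mul_apply_deltaC (hM : 3 ≤ #M) (i j : Fin m) :
    ∑ t ∈ deltaC M, t i * t j = 0 := by
  obtain ⟨k, hkM, hkij⟩ := exists_mem_notMem_of_card_lt_card
    (lt_of_le_of_lt (card_le_two : #{i, j} ≤ 2) hM)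
  have hfactor : ∀ t : Fin m → ZMod 2,
      t i * t j = ∏ l, (if l = i then t l else 1) * (if l = j then t l else 1) := fun t => by
    rw [prod_mul_distrib]
    simp
  rw [sum_congr rfl fun t _ => hfactor t, deltaC_eq_piFinset,
    ← prod_univ_sum _ fun l x => (if l = i then x else 1) * (if l = j then x else 1)]
  refine prod_eq_zero (mem_univ k) ?_
  simp only [mem_insert, mem_singleton, not_or] at hkij
  simp [hkM, hkij.1, hkij.2]
  decide

lemma sum_dotp_mul_dotp_deltaC (hM : 3 ≤ #M) (γ δ : Fin m → ZMod 2) :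
    ∑ t ∈ deltaC M, dotp γ t * dotp δ t = 0 := by
  simp only [dotp, sum_mul_sum, sum_comm (s := deltaC M), mul_mul_mul_comm (γ _), ← mul_sum,
    sum_apply_mul_apply_deltaC hM, mul_zero, sum_const_zero]

end Delta

lemma sum_subtype_product_eq_card_smul {α β κ R : Type*} [Fintype κ] [AddCommMonoid R]
    (A : Finset α) (B : Finset β) (F : κ → α → R) :
    ∑ x : {d // d ∈ A ×ˢ B} × κ, F x.2 x.1.1.1 = #B • ∑ k, ∑ t ∈ A, F k t := by
  rw [Fintype.sum_prod_type_right, smul_sum]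
  refine sum_congr rfl fun k _ => ?_
  rw [sum_coe_sort (A ×ˢ B) fun d => F k d.1, sum_product, smul_sum]
  simp

section Gray

variable {m : ℕ}

/-- The two binary blocks `(β, α + β)` of the Gray image of `v = aα + cβ ∈ E^m`. -/
def grayVec (v : (Fin m → ZMod 2) × (Fin m → ZMod 2)) : Fin 2 → Fin m → ZMod 2 :=
  ![v.2, v.1 + v.2]

-- The Gray map is `𝔽₂`-linear, so it commutes with taking inner products with `t₁`.
lemma gcwL_apply (Ds : Finset ((Fin m → ZMod 2) × (Fin m → ZMod 2)))
    (v : (Fin m → ZMod 2) × (Fin m → ZMod 2)) (x : {d // d ∈ Ds} × Fin 2) :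
    gcwL Ds v x = dotp (grayVec v x.2) x.1.1.1 := by
  obtain ⟨d, k⟩ := x
  fin_cases k <;> simp [gcwL, cwL, grayPair, grayVec, dotp_eq_dotProduct]

lemma gcwL_add (Ds : Finset ((Fin m → ZMod 2) × (Fin m → ZMod 2)))
    (v w : (Fin m → ZMod 2) × (Fin m → ZMod 2)) :
    gcwL Ds (v + w) = gcwL Ds v + gcwL Ds w := by
  ext ⟨d, k⟩
  simp only [gcwL_apply, Pi.add_apply, dotp_eq_dotProduct]
  fin_cases k <;> simp [grayVec, add_add_add_comm]

section Product

variable (A B : Finset (Fin m → ZMod 2))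
  (v w : (Fin m → ZMod 2) × (Fin m → ZMod 2))

lemma hammingNorm_gcwL_product :
    hammingNorm (gcwL (A ×ˢ B) v) = #B * ∑ k, #{t ∈ A | dotp (grayVec v k) t ≠ 0} := by
  simp only [hammingNorm, card_filter, gcwL_apply]
  exact sum_subtype_product_eq_card_smul A B fun k t => if dotp (grayVec v k) t ≠ 0 then 1 else 0

lemma sum_gcwL_mul_gcwL_product :
    ∑ x, gcwL (A ×ˢ B) v x * gcwL (A ×ˢ B) w x =
      #B • ∑ k, ∑ t ∈ A, dotp (grayVec v k) t * dotp (grayVec w k) t := by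
  simp only [gcwL_apply]
  exact sum_subtype_product_eq_card_smul A B fun k t => dotp (grayVec v k) t * dotp (grayVec w k) t

end Product

section Simplicial

variable {M : Finset (Fin m)} {B : Finset (Fin m → ZMod 2)}

lemma gcwL_piecewise (v : (Fin m → ZMod 2) × (Fin m → ZMod 2)) :
    gcwL (deltaC M ×ˢ B) (M.piecewise v.1 0, M.piecewise v.2 0) = gcwL (deltaC M ×ˢ B) v := by
  ext ⟨d, k⟩
  simp only [gcwL, cwL, dotp_piecewise_of_mem_deltaC _ (mem_product.1 d.2).1]

lemma image_gcwL_univ :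
    univ.image (gcwL (deltaC M ×ˢ B)) = (deltaC M ×ˢ deltaC M).image (gcwL (deltaC M ×ˢ B)) := by
  refine Subset.antisymm (fun c hc => ?_) (image_subset_image (subset_univ _))
  obtain ⟨v, -, rfl⟩ := mem_image.1 hc
  exact mem_image.2 ⟨_, mem_product.2 ⟨piecewise_mem_deltaC _, piecewise_mem_deltaC _⟩,
    gcwL_piecewise v⟩

-- Reading off the coordinates at `(e_i, t₂)` recovers `v` on `M`.
lemma injOn_gcwL (hB : B.Nonempty) :
    Set.InjOn (gcwL (deltaC M ×ˢ B)) ↑(deltaC M ×ˢ deltaC M) := by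
  obtain ⟨t₂, ht₂⟩ := hB
  intro v hv w hw h
  simp only [coe_product, Set.mem_prod, mem_coe] at hv hw
  have hgray : ∀ i ∈ M, ∀ k, grayVec v k i = grayVec w k i := fun i hi k => by
    simpa [gcwL_apply, dotp_eq_dotProduct] using
      congrFun h (⟨(Pi.single i 1, t₂), mem_product.2 ⟨single_mem_deltaC hi 1, ht₂⟩⟩, k)
  have h₂ : ∀ i ∈ M, v.2 i = w.2 i := fun i hi => hgray i hi 0
  have h₁ : ∀ i ∈ M, v.1 i = w.1 i := fun i hi => by
    have h := hgray i hi 1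
    simp only [grayVec, Matrix.cons_val_one, Matrix.cons_val_zero, Pi.add_apply, h₂ i hi] at h
    exact add_right_cancel h
  exact Prod.ext (eq_of_mem_deltaC hv.1 hw.1 h₁) (eq_of_mem_deltaC hv.2 hw.2 h₂)

lemma card_image_gcwL (hB : B.Nonempty) :
    #(univ.image (gcwL (deltaC M ×ˢ B))) = 2 ^ (2 * #M) := by
  rw [image_gcwL_univ, card_image_of_injOn (injOn_gcwL hB), card_product, card_deltaC, two_mul,
    pow_add]

lemma le_hammingNorm_gcwL {v : (Fin m → ZMod 2) × (Fin m → ZMod 2)}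
    (hv : gcwL (deltaC M ×ˢ B) v ≠ 0) :
    #B * 2 ^ (#M - 1) ≤ hammingNorm (gcwL (deltaC M ×ˢ B) v) := by
  obtain ⟨k, i, hi, hvi⟩ : ∃ k i, i ∈ M ∧ grayVec v k i ≠ 0 := by
    by_contra! h
    exact hv (funext fun x => by
      rw [gcwL_apply]
      exact dotp_eq_zero_of_mem_deltaC (mem_product.1 x.1.2).1 (h x.2))
  rw [hammingNorm_gcwL_product, ← card_filter_dotp_ne_zero hi hvi]
  exact Nat.mul_le_mul_left _ <|
    single_le_sum (f := fun k => #{t ∈ deltaC M | dotp (grayVec v k) t ≠ 0})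
      (fun _ _ => Nat.zero_le _) (mem_univ k)

lemma hammingNorm_gcwL_single {i : Fin m} (hi : i ∈ M) :
    hammingNorm (gcwL (deltaC M ×ˢ B) (Pi.single i 1, 0)) = #B * 2 ^ (#M - 1) := by
  rw [hammingNorm_gcwL_product, Fin.sum_univ_two]
  have h₀ : grayVec (Pi.single i 1, 0) 0 = 0 := rfl
  have h₁ : grayVec (Pi.single i 1, 0) 1 = Pi.single i 1 := add_zero _
  have hsingle : Pi.single (M := fun _ => ZMod 2) i 1 i ≠ 0 := by
    rw [Pi.single_eq_same]; exact one_ne_zero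
  rw [h₀, h₁, card_filter_dotp_ne_zero hi hsingle]
  simp [dotp_eq_dotProduct]

end Simplicial

lemma sum_gcwL_mul_gcwL_eq_zero {M N : Finset (Fin m)} (h : 3 ≤ #M + #N)
    (v w : (Fin m → ZMod 2) × (Fin m → ZMod 2)) :
    ∑ x, gcwL (deltaC M ×ˢ (deltaC N)ᶜ) v x * gcwL (deltaC M ×ˢ (deltaC N)ᶜ) w x = 0 := by
  rw [sum_gcwL_mul_gcwL_product]
  rcases Nat.eq_zero_or_pos #N with hN | hN
  · simp [sum_dotp_mul_dotp_deltaC (by omega : 3 ≤ #M)]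
  · have hm : 0 < m := hN.trans_le (card_le_univ N |>.trans_eq (Fintype.card_fin m))
    have heven : Even #(deltaC N)ᶜ := by
      rw [card_compl_deltaC]
      exact (Nat.even_pow.2 ⟨even_two, hm.ne'⟩).tsub (Nat.even_pow.2 ⟨even_two, hN.ne'⟩)
    rw [nsmul_eq_mul, ZMod.natCast_eq_zero_iff_even.2 heven, zero_mul]

end Gray

theorem stmt_7_general {m : ℕ} (M N : Finset (Fin m))
    (hM : M ≠ ∅) (hNu : N ≠ Finset.univ)
    (Ds : Finset ((Fin m → ZMod 2) × (Fin m → ZMod 2)))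
    (hDs : Ds = deltaC M ×ˢ (deltaC N)ᶜ) :
    (2 * Ds.card = 2 ^ (M.card + 1) * (2 ^ m - 2 ^ N.card)) ∧
    ((Finset.univ : Finset ((Fin m → ZMod 2) × (Fin m → ZMod 2))).image (gcwL Ds)).card = 2 ^ (2 * M.card) ∧
    (∀ v w : (Fin m → ZMod 2) × (Fin m → ZMod 2), ∃ z : (Fin m → ZMod 2) × (Fin m → ZMod 2), gcwL Ds z = gcwL Ds v + gcwL Ds w) ∧
    (∀ v : (Fin m → ZMod 2) × (Fin m → ZMod 2), gcwL Ds v ≠ 0 → 2 ^ (M.card - 1) * (2 ^ m - 2 ^ N.card) ≤ hammingNorm (gcwL Ds v)) ∧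
    (∃ v : (Fin m → ZMod 2) × (Fin m → ZMod 2), gcwL Ds v ≠ 0 ∧ hammingNorm (gcwL Ds v) = 2 ^ (M.card - 1) * (2 ^ m - 2 ^ N.card)) ∧
    (3 ≤ M.card + N.card →
      ∀ v w : (Fin m → ZMod 2) × (Fin m → ZMod 2), ∑ i, gcwL Ds v i * gcwL Ds w i = 0) := by
  subst hDs
  obtain ⟨i, hi⟩ := nonempty_iff_ne_empty.2 hM
  have hcard : #(deltaC N)ᶜ = 2 ^ m - 2 ^ #N := card_compl_deltaC N
  have hpos : 0 < #(deltaC N)ᶜ := by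
    have hN : #N < m := (card_lt_iff_ne_univ N).2 hNu |>.trans_eq (Fintype.card_fin m)
    rw [hcard, tsub_pos_iff_lt]
    exact Nat.pow_lt_pow_right one_lt_two hN
  have hweight := hammingNorm_gcwL_single (B := (deltaC N)ᶜ) hi
  refine ⟨?_, card_image_gcwL (card_pos.1 hpos), fun v w => ⟨v + w, gcwL_add _ v w⟩,
    fun v hv => ?_, ⟨(Pi.single i 1, 0), ?_, ?_⟩, sum_gcwL_mul_gcwL_eq_zero⟩
  · rw [card_product, card_deltaC, hcard]
    ring
  · rw [mul_comm, ← hcard]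
    exact le_hammingNorm_gcwL hv
  · rw [← hammingNorm_pos_iff, hweight]
    positivity
  · rw [hweight, hcard, mul_comm]

theorem stmt_7 {m : ℕ} (hm : 1 ≤ m) (M N : Finset (Fin m))
    (hM : M ≠ ∅) (hNu : N ≠ Finset.univ)
    (Ds : Finset ((Fin m → ZMod 2) × (Fin m → ZMod 2)))
    (hDs : Ds = deltaC M ×ˢ (deltaC N)ᶜ) :
    (2 * Ds.card = 2 ^ (M.card + 1) * (2 ^ m - 2 ^ N.card)) ∧
    ((Finset.univ : Finset ((Fin m → ZMod 2) × (Fin m → ZMod 2))).image (gcwL Ds)).card = 2 ^ (2 * M.card) ∧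
    (∀ v w : (Fin m → ZMod 2) × (Fin m → ZMod 2), ∃ z : (Fin m → ZMod 2) × (Fin m → ZMod 2), gcwL Ds z = gcwL Ds v + gcwL Ds w) ∧
    (∀ v : (Fin m → ZMod 2) × (Fin m → ZMod 2), gcwL Ds v ≠ 0 → 2 ^ (M.card - 1) * (2 ^ m - 2 ^ N.card) ≤ hammingNorm (gcwL Ds v)) ∧
    (∃ v : (Fin m → ZMod 2) × (Fin m → ZMod 2), gcwL Ds v ≠ 0 ∧ hammingNorm (gcwL Ds v) = 2 ^ (M.card - 1) * (2 ^ m - 2 ^ N.card)) ∧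
    (3 ≤ M.card + N.card →
      ∀ v w : (Fin m → ZMod 2) × (Fin m → ZMod 2), ∑ i, gcwL Ds v i * gcwL Ds w i = 0) :=
  stmt_7_general M N hM hNu Ds hDs
end

section
/- Let m ≥ 1, let M, N ⊆ [m] with ∅ ≠ M ⊊ [m], and let D^c = E^m ∖ (aΔ_M + cΔ_N), indexed by (F₂^m×F₂^m) ∖ (Δ_M×Δ_N). Then the binary Gray image Φ(C^L_{D^c}) is an F₂-linear code of length 2^{2m+1}−2^{|M|+|N|+1}, with 2^{2m} codewords (F₂-dimension 2m), and minimum nonzero Hamming weight 2^{2m−1}−2^{|M|+|N|−1}. Moreover, if |M|+|N| ≥ 3, then Φ(C^L_{D^c}) is self-orthogonal. -/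
open Finset

namespace Stmt9Aux
variable {m : ℕ}

variable {m : ℕ}

lemma zmod2_ne (x : ZMod 2) : x ≠ 0 ↔ x = 1 := by revert x; decide
lemma zmod2_addself (x : ZMod 2) : x + x = 0 := by revert x; decide

lemma mem_deltaC {M : Finset (Fin m)} {w : Fin m → ZMod 2} :
    w ∈ deltaC M ↔ ∀ i, w i ≠ 0 → i ∈ M := by simp [deltaC]

lemma deltaC_apply_eq_zero {M : Finset (Fin m)} {w : Fin m → ZMod 2}
    (hw : w ∈ deltaC M) {i : Fin m} (hi : i ∉ M) : w i = 0 := by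
  by_contra h; exact hi (mem_deltaC.mp hw i h)

lemma deltaC_closed {M : Finset (Fin m)} {w w' : Fin m → ZMod 2}
    (hw : w ∈ deltaC M) (hw' : w' ∈ deltaC M) : w + w' ∈ deltaC M := by
  rw [mem_deltaC]
  intro i hi
  by_contra h
  rw [Pi.add_apply, deltaC_apply_eq_zero hw h, deltaC_apply_eq_zero hw' h] at hi
  simp at hi

lemma single_mem_deltaC {M : Finset (Fin m)} {k : Fin m} (hk : k ∈ M) :
    Pi.single k (1 : ZMod 2) ∈ deltaC M := by
  rw [mem_deltaC]
  intro i hi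
  by_contra h
  exact hi (Pi.single_eq_of_ne (by rintro rfl; exact h hk) 1)

lemma dotp_add_left (x y t : Fin m → ZMod 2) : dotp (x + y) t = dotp x t + dotp y t := by
  simp [dotp, add_mul, Finset.sum_add_distrib]

lemma dotp_add_right (x t t' : Fin m → ZMod 2) : dotp x (t + t') = dotp x t + dotp x t' := by
  simp [dotp, mul_add, Finset.sum_add_distrib]

lemma dotp_single (γ : Fin m → ZMod 2) (i : Fin m) : dotp γ (Pi.single i 1) = γ i := by
  simp [dotp, Pi.single_apply, mul_ite]

lemma dotp_zero_left (t : Fin m → ZMod 2) : dotp 0 t = 0 := by simp [dotp]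

lemma deltaC_card (M : Finset (Fin m)) : (deltaC M).card = 2 ^ M.card := by
  have himg : deltaC M = Finset.image
      (fun f : ↥M → ZMod 2 => fun i => if h : i ∈ M then f ⟨i, h⟩ else 0) Finset.univ := by
    ext w
    simp only [Finset.mem_image, Finset.mem_univ, true_and]
    constructor
    · intro hw
      refine ⟨fun k => w k.1, ?_⟩
      funext i
      by_cases h : i ∈ M
      · simp [h]
      · simp [h, deltaC_apply_eq_zero hw h]
    · rintro ⟨f, rfl⟩
      rw [mem_deltaC]
      intro i hi
      by_contra h
      simp [h] at hi
  have hinj : Function.Injective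
      (fun f : ↥M → ZMod 2 => fun i => if h : i ∈ M then f ⟨i, h⟩ else 0) := by
    intro f g hfg
    funext k
    have := congrFun hfg k.1
    simpa [k.2] using this
  rw [himg, Finset.card_image_of_injective _ hinj, Finset.card_univ, Fintype.card_fun,
    Fintype.card_coe]
  norm_num

lemma half_card {s : Finset (Fin m → ZMod 2)} {γ t₀ : Fin m → ZMod 2}
    (hcl : ∀ t ∈ s, t + t₀ ∈ s) (ht₀ : dotp γ t₀ = 1) :
    2 * (s.filter (fun t => dotp γ t = 1)).card = s.card := by
  have hsplit := Finset.card_filter_add_card_filter_not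
    (s := s) (p := fun t => dotp γ t = 1)
  have hx : ∀ x : ZMod 2, (¬ x = 1) ↔ x = 0 := by decide
  rw [Finset.filter_congr (fun t _ => hx (dotp γ t))] at hsplit
  have hbij : (s.filter (fun t => dotp γ t = 1)).card
      = (s.filter (fun t => dotp γ t = 0)).card := by
    apply Finset.card_bij' (fun t _ => t + t₀) (fun t _ => t + t₀)
    · intro t ht
      rw [Finset.mem_filter] at ht ⊢
      refine ⟨hcl t ht.1, ?_⟩
      rw [dotp_add_right, ht.2, ht₀]
      decide
    · intro t ht
      rw [Finset.mem_filter] at ht ⊢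
      refine ⟨hcl t ht.1, ?_⟩
      rw [dotp_add_right, ht.2, ht₀, zero_add]
    · intro t _
      rw [add_assoc]
      funext i
      simp [zmod2_addself]
    · intro t _
      rw [add_assoc]
      funext i
      simp [zmod2_addself]
  omega



lemma card_fun2 : Fintype.card (Fin m → ZMod 2) = 2 ^ m := by
  rw [Fintype.card_fun]
  norm_num

lemma univ_half {γ : Fin m → ZMod 2} (hγ : γ ≠ 0) :
    2 * ((Finset.univ : Finset (Fin m → ZMod 2)).filter (fun t => dotp γ t = 1)).card
      = 2 ^ m := by
  obtain ⟨i, hi⟩ := Function.ne_iff.mp hγ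
  rw [half_card (fun t _ => Finset.mem_univ _) (t₀ := Pi.single i 1) (by
    rw [dotp_single]; exact (zmod2_ne _).mp hi), Finset.card_univ, card_fun2]

lemma deltaC_half {M : Finset (Fin m)} {γ : Fin m → ZMod 2} {i : Fin m}
    (hi : i ∈ M) (hγ : γ i = 1) :
    2 * ((deltaC M).filter (fun t => dotp γ t = 1)).card = 2 ^ M.card := by
  rw [half_card (fun t ht => deltaC_closed ht (single_mem_deltaC hi)) (t₀ := Pi.single i 1)
    (by rw [dotp_single]; exact hγ), deltaC_card]

lemma dotp_eq_zero_on_deltaC {M : Finset (Fin m)} {γ : Fin m → ZMod 2}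
    (h : ∀ i ∈ M, γ i = 0) {t : Fin m → ZMod 2} (ht : t ∈ deltaC M) : dotp γ t = 0 := by
  apply Finset.sum_eq_zero
  intro i _
  by_cases hiM : i ∈ M
  · rw [h i hiM, zero_mul]
  · rw [deltaC_apply_eq_zero ht hiM, mul_zero]

lemma deltaC_filter_zero {M : Finset (Fin m)} {γ : Fin m → ZMod 2}
    (h : ∀ i ∈ M, γ i = 0) :
    ((deltaC M).filter (fun t => dotp γ t = 1)).card = 0 := by
  rw [Finset.card_eq_zero, Finset.filter_eq_empty_iff]
  intro t ht
  rw [dotp_eq_zero_on_deltaC h ht]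
  decide

lemma univ_filter_zero :
    ((Finset.univ : Finset (Fin m → ZMod 2)).filter (fun t => dotp 0 t = 1)).card = 0 := by
  rw [Finset.card_eq_zero, Finset.filter_eq_empty_iff]
  intro t _
  rw [dotp_zero_left]
  decide

lemma filter_fst_card (s t : Finset (Fin m → ZMod 2)) (p : (Fin m → ZMod 2) → Prop)
    [DecidablePred p] :
    ((s ×ˢ t).filter (fun d => p d.1)).card = (s.filter p).card * t.card := by
  rw [← Finset.card_product]
  congr 1
  ext d
  simp only [Finset.mem_filter, Finset.mem_product]
  tauto

lemma compl_filter_card (S : Finset ((Fin m → ZMod 2) × (Fin m → ZMod 2)))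
    (p : (Fin m → ZMod 2) × (Fin m → ZMod 2) → Prop) [DecidablePred p] :
    (Sᶜ.filter p).card = (Finset.univ.filter p).card - (S.filter p).card := by
  have h1 : Sᶜ.filter p = Finset.univ.filter p \ S.filter p := by
    ext d
    simp only [Finset.mem_filter, Finset.mem_sdiff, Finset.mem_compl, Finset.mem_univ, true_and]
    tauto
  rw [h1, Finset.card_sdiff_of_subset]
  intro d hd
  simp only [Finset.mem_filter] at hd ⊢
  exact ⟨Finset.mem_univ _, hd.2⟩

/-- The master count. -/
lemma countDs (M N : Finset (Fin m)) (γ : Fin m → ZMod 2) :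
    (((deltaC M ×ˢ deltaC N)ᶜ).filter (fun d => dotp γ d.1 = 1)).card
      = (Finset.univ.filter (fun t => dotp γ t = 1)).card * 2 ^ m
        - ((deltaC M).filter (fun t => dotp γ t = 1)).card * 2 ^ N.card := by
  rw [compl_filter_card, ← Finset.univ_product_univ,
    filter_fst_card Finset.univ Finset.univ (fun t => dotp γ t = 1),
    filter_fst_card (deltaC M) (deltaC N) (fun t => dotp γ t = 1),
    Finset.card_univ, card_fun2, deltaC_card]

lemma countDs_zero (M N : Finset (Fin m)) :
    (((deltaC M ×ˢ deltaC N)ᶜ).filter (fun d => dotp (0 : Fin m → ZMod 2) d.1 = 1)).card = 0 := by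
  rw [countDs, univ_filter_zero, deltaC_filter_zero (γ := 0) (fun i _ => rfl)]
  simp

lemma countDs_mem (M N : Finset (Fin m)) (hm : 1 ≤ m) (hM1 : 1 ≤ M.card)
    {γ : Fin m → ZMod 2} {i : Fin m} (hiM : i ∈ M) (hγ : γ i = 1) :
    (((deltaC M ×ˢ deltaC N)ᶜ).filter (fun d => dotp γ d.1 = 1)).card
      = 2 ^ (2 * m - 1) - 2 ^ (M.card + N.card - 1) := by
  have h0 : γ ≠ 0 := by
    intro h
    rw [h, Pi.zero_apply] at hγ
    exact absurd hγ (by decide)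
  rw [countDs]
  have hA := univ_half h0
  have hB := deltaC_half hiM hγ
  have e1 : 2 ^ m = 2 * 2 ^ (m - 1) := by
    rw [← pow_succ']
    congr 1
    omega
  have e2 : 2 ^ M.card = 2 * 2 ^ (M.card - 1) := by
    rw [← pow_succ']
    congr 1
    omega
  have hAv : (Finset.univ.filter (fun t => dotp γ t = 1)).card = 2 ^ (m - 1) := by omega
  have hBv : ((deltaC M).filter (fun t => dotp γ t = 1)).card = 2 ^ (M.card - 1) := by omega
  rw [hAv, hBv, ← pow_add, ← pow_add]
  congr 2 <;> omega

lemma countDs_nmem (M N : Finset (Fin m)) (hm : 1 ≤ m) {γ : Fin m → ZMod 2}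
    (h0 : γ ≠ 0) (hM' : ∀ i ∈ M, γ i = 0) :
    (((deltaC M ×ˢ deltaC N)ᶜ).filter (fun d => dotp γ d.1 = 1)).card = 2 ^ (2 * m - 1) := by
  rw [countDs, deltaC_filter_zero hM', zero_mul, Nat.sub_zero]
  have hA := univ_half h0
  have e1 : 2 ^ m = 2 * 2 ^ (m - 1) := by
    rw [← pow_succ']
    congr 1
    omega
  have hAv : (Finset.univ.filter (fun t => dotp γ t = 1)).card = 2 ^ (m - 1) := by omega
  rw [hAv, ← pow_add]
  congr 1
  omega

lemma countDs_tri (M N : Finset (Fin m)) (hm : 1 ≤ m) (hM1 : 1 ≤ M.card)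
    (γ : Fin m → ZMod 2) :
    (((deltaC M ×ˢ deltaC N)ᶜ).filter (fun d => dotp γ d.1 = 1)).card = 0 ∨
    (((deltaC M ×ˢ deltaC N)ᶜ).filter (fun d => dotp γ d.1 = 1)).card = 2 ^ (2 * m - 1) ∨
    (((deltaC M ×ˢ deltaC N)ᶜ).filter (fun d => dotp γ d.1 = 1)).card
      = 2 ^ (2 * m - 1) - 2 ^ (M.card + N.card - 1) := by
  by_cases h0 : γ = 0
  · left
    subst h0
    exact countDs_zero M N
  by_cases hM : ∃ i ∈ M, γ i = 1
  · right; right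
    obtain ⟨i, hiM, hγ⟩ := hM
    exact countDs_mem M N hm hM1 hiM hγ
  · right; left
    push_neg at hM
    have hM' : ∀ i ∈ M, γ i = 0 := by
      intro i hi
      have := hM i hi
      revert this
      generalize γ i = x
      revert x
      decide
    exact countDs_nmem M N hm h0 hM'

lemma gcwL_apply0 (Ds : Finset ((Fin m → ZMod 2) × (Fin m → ZMod 2))) (v) (d : {d // d ∈ Ds}) :
    gcwL Ds v (d, 0) = dotp v.2 d.1.1 := rfl

lemma gcwL_apply1 (Ds : Finset ((Fin m → ZMod 2) × (Fin m → ZMod 2))) (v) (d : {d // d ∈ Ds}) :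
    gcwL Ds v (d, 1) = dotp (v.1 + v.2) d.1.1 := by
  show dotp v.1 d.1.1 + dotp v.2 d.1.1 = _
  rw [dotp_add_left]

lemma weight_formula (Ds : Finset ((Fin m → ZMod 2) × (Fin m → ZMod 2)))
    (v : (Fin m → ZMod 2) × (Fin m → ZMod 2)) :
    hammingNorm (gcwL Ds v)
      = (Ds.filter (fun d => dotp v.2 d.1 = 1)).card
        + (Ds.filter (fun d => dotp (v.1 + v.2) d.1 = 1)).card := by
  unfold hammingNorm
  rw [Finset.card_filter]
  rw [Fintype.sum_prod_type]
  have hrow : ∀ d : {d // d ∈ Ds},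
      (∑ j : Fin 2, if gcwL Ds v (d, j) ≠ 0 then 1 else 0)
        = ((if dotp v.2 d.1.1 = 1 then 1 else 0)
          + (if dotp (v.1 + v.2) d.1.1 = 1 then 1 else 0) : ℕ) := by
    intro d
    rw [Fin.sum_univ_two, gcwL_apply0, gcwL_apply1]
    simp only [ne_eq, zmod2_ne]
  rw [Finset.sum_congr rfl (fun d _ => hrow d)]
  rw [Finset.sum_add_distrib]
  congr 1
  · rw [Finset.card_filter, ← Finset.sum_coe_sort Ds (fun d => if dotp v.2 d.1 = 1 then 1 else 0)]
  · rw [Finset.card_filter,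
      ← Finset.sum_coe_sort Ds (fun d => if dotp (v.1 + v.2) d.1 = 1 then 1 else 0)]

lemma gcwL_add (Ds : Finset ((Fin m → ZMod 2) × (Fin m → ZMod 2))) (v w) :
    gcwL Ds (v + w) = gcwL Ds v + gcwL Ds w := by
  funext p
  obtain ⟨d, j⟩ := p
  fin_cases j
  · show gcwL Ds (v+w) (d, 0) = gcwL Ds v (d,0) + gcwL Ds w (d,0)
    rw [gcwL_apply0, gcwL_apply0, gcwL_apply0]
    show dotp (v.2 + w.2) d.1.1 = _
    rw [dotp_add_left]
  · show gcwL Ds (v+w) (d, 1) = gcwL Ds v (d,1) + gcwL Ds w (d,1)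
    rw [gcwL_apply1, gcwL_apply1, gcwL_apply1]
    show dotp ((v.1 + w.1) + (v.2 + w.2)) d.1.1 = _
    rw [show (v.1 + w.1) + (v.2 + w.2) = (v.1 + v.2) + (w.1 + w.2) by ring, dotp_add_left]

lemma dotp_vanish {M : Finset (Fin m)} (hMu : M ≠ Finset.univ) {γ : Fin m → ZMod 2}
    (h : ∀ t ∉ deltaC M, dotp γ t = 0) : γ = 0 := by
  obtain ⟨i₀, hi₀⟩ : ∃ i, i ∉ M := by
    by_contra hc
    push_neg at hc
    exact hMu (Finset.eq_univ_iff_forall.mpr hc)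
  have h0 : γ i₀ = 0 := by
    rw [← dotp_single γ i₀]
    apply h
    rw [mem_deltaC]
    push_neg
    exact ⟨i₀, by rw [Pi.single_eq_same]; decide, hi₀⟩
  funext j
  by_cases hj : j = i₀
  · rw [hj, h0]; rfl
  · have hmem : Pi.single i₀ (1:ZMod 2) + Pi.single j 1 ∉ deltaC M := by
      rw [mem_deltaC]
      push_neg
      refine ⟨i₀, ?_, hi₀⟩
      rw [Pi.add_apply, Pi.single_eq_same, Pi.single_eq_of_ne (fun h' : i₀ = j => hj h'.symm) 1]
      decide
    have := h _ hmem
    rw [dotp_add_right, dotp_single, dotp_single, h0, zero_add] at this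
    rw [this]; rfl

lemma gcwL_injective {M N : Finset (Fin m)} (hMu : M ≠ Finset.univ) :
    Function.Injective (gcwL ((deltaC M ×ˢ deltaC N)ᶜ)) := by
  set Ds := (deltaC M ×ˢ deltaC N)ᶜ with hDs
  have hzero : ∀ v, gcwL Ds v = 0 → v = 0 := by
    intro v hv
    have hmem : ∀ t₁ : Fin m → ZMod 2, t₁ ∉ deltaC M → (t₁, (0 : Fin m → ZMod 2)) ∈ Ds := by
      intro t₁ ht₁
      rw [hDs, Finset.mem_compl, Finset.mem_product]
      intro hc
      exact ht₁ hc.1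
    have hv2 : ∀ t₁ ∉ deltaC M, dotp v.2 t₁ = 0 := by
      intro t₁ ht₁
      have := congrFun hv (⟨(t₁, 0), hmem t₁ ht₁⟩, 0)
      rwa [gcwL_apply0] at this
    have hv12 : ∀ t₁ ∉ deltaC M, dotp (v.1 + v.2) t₁ = 0 := by
      intro t₁ ht₁
      have := congrFun hv (⟨(t₁, 0), hmem t₁ ht₁⟩, 1)
      rwa [gcwL_apply1] at this
    have h2 : v.2 = 0 := dotp_vanish hMu hv2
    have h12 : v.1 + v.2 = 0 := dotp_vanish hMu hv12
    have h1 : v.1 = 0 := by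
      rw [h2, add_zero] at h12
      exact h12
    exact Prod.ext h1 h2
  intro v w hvw
  have hsum : gcwL Ds (v + w) = 0 := by
    rw [gcwL_add, hvw]
    funext p
    rw [Pi.add_apply, Pi.zero_apply, zmod2_addself]
  have := hzero _ hsum
  have hvw' : v = -w := eq_neg_of_add_eq_zero_left this
  have hneg : ∀ x : ZMod 2, -x = x := by decide
  rw [hvw']
  refine Prod.ext ?_ ?_ <;> (funext i; simp [hneg])



lemma sum_titj {M : Finset (Fin m)} (hM3 : 3 ≤ M.card) (i j : Fin m) :
    ∑ t ∈ deltaC M, t i * t j = 0 := by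
  by_cases hi : i ∈ M
  · by_cases hj : j ∈ M
    · have hne : (M \ {i, j}).Nonempty := by
        rw [← Finset.card_pos]
        have h1 : ({i, j} : Finset (Fin m)).card ≤ 2 := by
          apply le_trans (Finset.card_insert_le _ _)
          simp
        have h2 := Finset.le_card_sdiff ({i, j} : Finset (Fin m)) M
        omega
      obtain ⟨k, hk⟩ := hne
      rw [Finset.mem_sdiff, Finset.mem_insert, Finset.mem_singleton] at hk
      push_neg at hk
      obtain ⟨hkM, hki, hkj⟩ := hk
      apply Finset.sum_involution (fun t _ => t + Pi.single k 1)
      · intro t _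
        simp only [Pi.add_apply]
        rw [Pi.single_eq_of_ne (fun h : i = k => hki h.symm),
          Pi.single_eq_of_ne (fun h : j = k => hkj h.symm), add_zero, add_zero, zmod2_addself]
      · intro t _ _ hc
        have := congrFun hc k
        rw [Pi.add_apply, Pi.single_eq_same] at this
        have h1 : (1 : ZMod 2) = 0 := by
          have := add_left_cancel (a := t k) (b := (1:ZMod 2)) (c := 0) (by rw [add_zero]; exact this)
          exact this
        exact absurd h1 (by decide)
      · intro t _
        rw [add_assoc]
        funext l
        simp [zmod2_addself]
      · intro t ht
        exact deltaC_closed ht (single_mem_deltaC hkM)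
    · apply Finset.sum_eq_zero
      intro t ht
      rw [deltaC_apply_eq_zero ht hj, mul_zero]
  · apply Finset.sum_eq_zero
    intro t ht
    rw [deltaC_apply_eq_zero ht hi, zero_mul]

lemma sum_deltaC_dotp {M : Finset (Fin m)} (hM3 : 3 ≤ M.card) (γ δ : Fin m → ZMod 2) :
    ∑ t ∈ deltaC M, dotp γ t * dotp δ t = 0 := by
  have hexp : ∀ t : Fin m → ZMod 2,
      dotp γ t * dotp δ t = ∑ i : Fin m, ∑ j : Fin m, (γ i * δ j) * (t i * t j) := by
    intro t
    rw [dotp, dotp, Finset.sum_mul_sum]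
    congr 1
    funext i
    congr 1
    funext j
    ring
  rw [Finset.sum_congr rfl (fun t _ => hexp t), Finset.sum_comm]
  apply Finset.sum_eq_zero
  intro i _
  rw [Finset.sum_comm]
  apply Finset.sum_eq_zero
  intro j _
  rw [← Finset.mul_sum, sum_titj hM3 i j, mul_zero]

lemma sum_gray_formula (Ds : Finset ((Fin m → ZMod 2) × (Fin m → ZMod 2)))
    (v w : (Fin m → ZMod 2) × (Fin m → ZMod 2)) :
    ∑ p : {d // d ∈ Ds} × Fin 2, gcwL Ds v p * gcwL Ds w p
      = ∑ d ∈ Ds, (dotp v.2 d.1 * dotp w.2 d.1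
          + dotp (v.1 + v.2) d.1 * dotp (w.1 + w.2) d.1) := by
  rw [Fintype.sum_prod_type]
  rw [← Finset.sum_coe_sort Ds (fun d => dotp v.2 d.1 * dotp w.2 d.1
          + dotp (v.1 + v.2) d.1 * dotp (w.1 + w.2) d.1)]
  apply Finset.sum_congr rfl
  intro d _
  rw [Fin.sum_univ_two, gcwL_apply0, gcwL_apply0, gcwL_apply1, gcwL_apply1]

lemma nsmul_zmod2 (n : ℕ) (x : ZMod 2) (hn : 2 ∣ n) : n • x = 0 := by
  rw [nsmul_eq_mul]
  have h0 : ((n : ℕ) : ZMod 2) = 0 := (ZMod.natCast_eq_zero_iff n 2).mpr hn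
  rw [h0, zero_mul]

lemma orthog_sum {M N : Finset (Fin m)} (hm : 1 ≤ m) (h3 : 3 ≤ M.card + N.card)
    (γ δ : Fin m → ZMod 2) :
    ∑ d ∈ (deltaC M ×ˢ deltaC N)ᶜ, dotp γ d.1 * dotp δ d.1 = 0 := by
  have hkey := Finset.sum_add_sum_compl (deltaC M ×ˢ deltaC N)
    (fun d : (Fin m → ZMod 2) × (Fin m → ZMod 2) => dotp γ d.1 * dotp δ d.1)
  have huniv : ∑ d : (Fin m → ZMod 2) × (Fin m → ZMod 2), dotp γ d.1 * dotp δ d.1 = 0 := by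
    rw [Fintype.sum_prod_type]
    apply Finset.sum_eq_zero
    intro t₁ _
    have hconst : ∀ y : Fin m → ZMod 2, dotp γ (t₁, y).1 * dotp δ (t₁, y).1
        = dotp γ t₁ * dotp δ t₁ := fun _ => rfl
    rw [Finset.sum_congr rfl (fun y _ => hconst y), Finset.sum_const, Finset.card_univ,
      Fintype.card_fun]
    apply nsmul_zmod2
    have : Fintype.card (ZMod 2) = 2 := by decide
    rw [this, Fintype.card_fin]
    exact ⟨2 ^ (m - 1), by rw [← pow_succ']; congr 1; omega⟩
  have hS : ∑ d ∈ deltaC M ×ˢ deltaC N, dotp γ d.1 * dotp δ d.1 = 0 := by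
    rw [Finset.sum_product]
    by_cases hN : N.card = 0
    · have hM3 : 3 ≤ M.card := by omega
      have hNe : N = ∅ := Finset.card_eq_zero.mp hN
      calc ∑ t₁ ∈ deltaC M, ∑ t₂ ∈ deltaC N, dotp γ (t₁, t₂).1 * dotp δ (t₁, t₂).1
          = ∑ t₁ ∈ deltaC M, (deltaC N).card • (dotp γ t₁ * dotp δ t₁) := by
            apply Finset.sum_congr rfl; intro t₁ _
            have hconst : ∀ y : Fin m → ZMod 2, dotp γ (t₁, y).1 * dotp δ (t₁, y).1
                = dotp γ t₁ * dotp δ t₁ := fun _ => rfl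
            rw [Finset.sum_congr rfl (fun y _ => hconst y), Finset.sum_const]
        _ = ∑ t₁ ∈ deltaC M, dotp γ t₁ * dotp δ t₁ := by
            apply Finset.sum_congr rfl; intro t₁ _
            rw [deltaC_card, hNe]
            simp
        _ = 0 := sum_deltaC_dotp hM3 γ δ
    · apply Finset.sum_eq_zero
      intro t₁ _
      have hconst : ∀ y : Fin m → ZMod 2, dotp γ (t₁, y).1 * dotp δ (t₁, y).1
          = dotp γ t₁ * dotp δ t₁ := fun _ => rfl
      rw [Finset.sum_congr rfl (fun y _ => hconst y), Finset.sum_const]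
      apply nsmul_zmod2
      rw [deltaC_card]
      exact dvd_pow_self 2 hN
  rw [huniv, hS, zero_add] at hkey
  exact hkey



end Stmt9Aux

theorem stmt_9 {m : ℕ} (hm : 1 ≤ m) (M N : Finset (Fin m))
    (hM : M ≠ ∅) (hMu : M ≠ Finset.univ)
    (Ds : Finset ((Fin m → ZMod 2) × (Fin m → ZMod 2)))
    (hDs : Ds = (deltaC M ×ˢ deltaC N)ᶜ) :
    (2 * Ds.card = 2 ^ (2 * m + 1) - 2 ^ (M.card + N.card + 1)) ∧
    ((Finset.univ : Finset ((Fin m → ZMod 2) × (Fin m → ZMod 2))).image (gcwL Ds)).card = 2 ^ (2 * m) ∧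
    (∀ v w : (Fin m → ZMod 2) × (Fin m → ZMod 2), ∃ z : (Fin m → ZMod 2) × (Fin m → ZMod 2), gcwL Ds z = gcwL Ds v + gcwL Ds w) ∧
    (∀ v : (Fin m → ZMod 2) × (Fin m → ZMod 2), gcwL Ds v ≠ 0 → 2 ^ (2 * m - 1) - 2 ^ (M.card + N.card - 1) ≤ hammingNorm (gcwL Ds v)) ∧
    (∃ v : (Fin m → ZMod 2) × (Fin m → ZMod 2), gcwL Ds v ≠ 0 ∧ hammingNorm (gcwL Ds v) = 2 ^ (2 * m - 1) - 2 ^ (M.card + N.card - 1)) ∧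
    (3 ≤ M.card + N.card →
      ∀ v w : (Fin m → ZMod 2) × (Fin m → ZMod 2), ∑ i, gcwL Ds v i * gcwL Ds w i = 0) := by
  subst hDs
  set Ds := (deltaC M ×ˢ deltaC N)ᶜ with hDs
  have hM1 : 1 ≤ M.card := Finset.card_pos.mpr (Finset.nonempty_iff_ne_empty.mpr hM)
  have hMm : M.card < m := by
    have := Finset.card_lt_card (Finset.ssubset_univ_iff.mpr hMu)
    simpa using this
  have hNm : N.card ≤ m := by simpa using Finset.card_le_univ N
  have hBA : 2 ^ (M.card + N.card - 1) ≤ 2 ^ (2 * m - 1) :=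
    Nat.pow_le_pow_right (by norm_num) (by omega)
  have hBAlt : 2 ^ (M.card + N.card - 1) < 2 ^ (2 * m - 1) :=
    Nat.pow_lt_pow_right (by norm_num) (by omega)
  refine ⟨?_, ?_, ?_, ?_, ?_, ?_⟩
  · -- length
    have hDscard : Ds.card = 2 ^ (2 * m) - 2 ^ (M.card + N.card) := by
      rw [hDs, Finset.card_compl, Finset.card_product, Stmt9Aux.deltaC_card,
        Stmt9Aux.deltaC_card, Fintype.card_prod, Stmt9Aux.card_fun2, ← pow_add, ← pow_add,
        two_mul]
    have hle : 2 ^ (M.card + N.card) ≤ 2 ^ (2 * m) :=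
      Nat.pow_le_pow_right (by norm_num) (by omega)
    have e1 : 2 ^ (2 * m + 1) = 2 * 2 ^ (2 * m) := by rw [pow_succ]; ring
    have e2 : 2 ^ (M.card + N.card + 1) = 2 * 2 ^ (M.card + N.card) := by rw [pow_succ]; ring
    omega
  · -- number of codewords
    rw [Finset.card_image_of_injective _ (Stmt9Aux.gcwL_injective hMu), Finset.card_univ,
      Fintype.card_prod, Stmt9Aux.card_fun2, ← pow_add, two_mul]
  · -- linearity
    intro v w
    exact ⟨v + w, Stmt9Aux.gcwL_add Ds v w⟩
  · -- minimum distance lower bound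
    intro v hv
    have hN0 : hammingNorm (gcwL Ds v) ≠ 0 := by rwa [Ne, hammingNorm_eq_zero]
    rw [Stmt9Aux.weight_formula] at hN0 ⊢
    have t1 := Stmt9Aux.countDs_tri M N hm hM1 v.2
    have t2 := Stmt9Aux.countDs_tri M N hm hM1 (v.1 + v.2)
    rw [← hDs] at t1 t2
    generalize hA : 2 ^ (2 * m - 1) = A at t1 t2 hBA ⊢
    generalize hB : 2 ^ (M.card + N.card - 1) = B at t1 t2 hBA ⊢
    rcases t1 with h1 | h1 | h1 <;> rcases t2 with h2 | h2 | h2 <;> omega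
  · -- minimum distance achieved
    obtain ⟨i₁, hi₁⟩ := Finset.nonempty_iff_ne_empty.mpr hM
    set v : (Fin m → ZMod 2) × (Fin m → ZMod 2) := (Pi.single i₁ 1, Pi.single i₁ 1) with hv
    have h12 : v.1 + v.2 = 0 := by
      funext l
      exact Stmt9Aux.zmod2_addself _
    have hw : hammingNorm (gcwL Ds v) = 2 ^ (2 * m - 1) - 2 ^ (M.card + N.card - 1) := by
      rw [Stmt9Aux.weight_formula]
      have hc1 : (Ds.filter (fun d => dotp v.2 d.1 = 1)).card
          = 2 ^ (2 * m - 1) - 2 ^ (M.card + N.card - 1) := by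
        rw [hDs]
        exact Stmt9Aux.countDs_mem M N hm hM1 hi₁ (Pi.single_eq_same i₁ 1)
      have hc2 : (Ds.filter (fun d => dotp (v.1 + v.2) d.1 = 1)).card = 0 := by
        simp only [h12]
        rw [hDs]
        exact Stmt9Aux.countDs_zero M N
      rw [hc1, hc2, add_zero]
    refine ⟨v, ?_, hw⟩
    intro h0
    rw [h0, hammingNorm_zero] at hw
    revert hw hBAlt
    generalize 2 ^ (2 * m - 1) = A
    generalize 2 ^ (M.card + N.card - 1) = B
    omega
  · -- self-orthogonality
    intro h3 v w
    rw [Stmt9Aux.sum_gray_formula, Finset.sum_add_distrib, hDs,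
      Stmt9Aux.orthog_sum hm h3, Stmt9Aux.orthog_sum hm h3, add_zero]
end
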